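/- arXiv:2411.01627 — 4 statements merged into one kernel-verified Lean document; each statement's English description precedes it below -/
import Mathlib

section
/- Axiom A5 of CPN_n is a tautology: for every formula φ, all chains c, d over [n], and every valuation, the formula ¬_c ¬_d φ ↔ₙ ¬_{c Δ d} φ evaluates to true in every world, where Δ is symmetric difference. -/
inductive Formula (n : ℕ) : Type
  | atom : ℕ → Formula n
  | bot : Finset (Fin n) → Formula n
  | neg : Finset (Fin n) → Formula n → Formula n
  | imp : Formula n → Formula n → Formula n

def Formula.eval {n : ℕ} (v : ℕ → Fin n → Bool) (i : Fin n) : Formula n → Bool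
  | .atom p => v p i
  | .bot c => if i ∈ c then false else true
  | .neg c φ => if i ∈ c then !(φ.eval v i) else φ.eval v i
  | .imp φ ψ => !(φ.eval v i) || ψ.eval v i

def Formula.and {n : ℕ} (φ ψ : Formula n) : Formula n :=
  .neg Finset.univ (.imp φ (.neg Finset.univ ψ))

def Formula.or {n : ℕ} (φ ψ : Formula n) : Formula n :=
  .imp (.neg Finset.univ φ) ψ

def Formula.iff {n : ℕ} (φ ψ : Formula n) : Formula n :=
  Formula.and (.imp φ ψ) (.imp ψ φ)

def Tautology {n : ℕ} (φ : Formula n) : Prop :=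
  ∀ (v : ℕ → Fin n → Bool) (i : Fin n), φ.eval v i = true

namespace Formula

variable {n : ℕ} (v : ℕ → Fin n → Bool) (i : Fin n)

theorem eval_iff (φ ψ : Formula n) : (φ.iff ψ).eval v i = (φ.eval v i == ψ.eval v i) := by
  simp only [Formula.iff, Formula.and, eval, Finset.mem_univ, if_true]
  cases φ.eval v i <;> cases ψ.eval v i <;> rfl

theorem eval_neg_neg (c d : Finset (Fin n)) (φ : Formula n) :
    (neg c (neg d φ)).eval v i = (neg (symmDiff c d) φ).eval v i := by
  simp only [eval, Finset.mem_symmDiff]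
  by_cases hc : i ∈ c <;> by_cases hd : i ∈ d <;> simp [hc, hd]

theorem tautology_iff_of_eval_eq {φ ψ : Formula n}
    (h : ∀ (v : ℕ → Fin n → Bool) (i : Fin n), φ.eval v i = ψ.eval v i) :
    Tautology (φ.iff ψ) := fun v i => by
  rw [eval_iff, h, beq_self_eq_true]

end Formula

theorem axiomA5_tautology (n : ℕ) (φ : Formula n) (c d : Finset (Fin n)) :
    Tautology (Formula.iff (.neg c (.neg d φ)) (.neg (symmDiff c d) φ)) :=
  Formula.tautology_iff_of_eval_eq (Formula.eval_neg_neg · · c d φ)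
end

section
/- The fundamental theorem of CPN_n is semantically valid: for all chains c_k, c_s over [n], letting c_r = c_k ∩ c_s, the formula ¬_{c_k} φ →ₙ (¬_{c_s} ψ →ₙ ¬_{c_s Δ c_r} (φ →ₙ ψ)) is a tautology, where Δ is symmetric difference (so c_s Δ c_r = c_s \ c_k). -/
/-!
In each world the theorem is a statement about four Booleans: whether the world lies in `c_k`
and in `c_s`, and the values `a`, `b` of `φ`, `ψ` there. The weak negation `¬_c` is `xor` with
membership in `c`, and the chain `c_s Δ (c_k ∩ c_s)` is `c_s \ c_k`; what remains is a Boolean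
identity.
-/

namespace Formula

variable {n : ℕ} (v : ℕ → Fin n → Bool) (i : Fin n)

theorem eval_neg_eq_xor (c : Finset (Fin n)) (φ : Formula n) :
    (neg c φ).eval v i = xor (decide (i ∈ c)) (φ.eval v i) := by
  by_cases hi : i ∈ c <;> simp [eval, hi]

theorem eval_imp (φ ψ : Formula n) : (imp φ ψ).eval v i = (!(φ.eval v i) || ψ.eval v i) := rfl

end Formula

theorem Finset.symmDiff_inter_self_right {α : Type*} [DecidableEq α] (s t : Finset α) :
    symmDiff s (t ∩ s) = s \ t := by
  rw [symmDiff_of_ge Finset.inter_subset_right, Finset.sdiff_inter_self_right]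

theorem fundamental_semantic (n : ℕ) (ck cs : Finset (Fin n)) (φ ψ : Formula n) :
    Tautology (Formula.imp (.neg ck φ)
      (.imp (.neg cs ψ) (.neg (symmDiff cs (ck ∩ cs)) (.imp φ ψ)))) := by
  intro v i
  have hchain : decide (i ∈ symmDiff cs (ck ∩ cs)) = (decide (i ∈ cs) && !decide (i ∈ ck)) := by
    simp [Finset.symmDiff_inter_self_right]
  simp only [Formula.eval_imp, Formula.eval_neg_eq_xor, hchain]
  generalize decide (i ∈ ck) = k, decide (i ∈ cs) = s, φ.eval v i = a, ψ.eval v i = b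
  revert k s a b
  decide
end

section
/- For n ≥ 1 and any chain c over [n] with c ≠ [n] (i.e., c a proper subset), the law of excluded middle for the weak negation ¬_c fails semantically: there exist a formula φ (e.g., an atom) and a valuation under which φ ∨ₙ ¬_c φ is false in some world. -/
namespace Formula

variable {n : ℕ} (v : ℕ → Fin n → Bool) {i : Fin n}

theorem eval_or (φ ψ : Formula n) : (φ.or ψ).eval v i = (φ.eval v i || ψ.eval v i) := by
  simp [Formula.or, eval]

theorem eval_neg_of_notMem {c : Finset (Fin n)} (hi : i ∉ c) (φ : Formula n) :
    (neg c φ).eval v i = φ.eval v i := by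
  simp [eval, hi]

theorem eval_or_neg_of_notMem {c : Finset (Fin n)} (hi : i ∉ c) (φ : Formula n) :
    (φ.or (neg c φ)).eval v i = φ.eval v i := by
  rw [eval_or, eval_neg_of_notMem v hi, Bool.or_self]

end Formula

theorem excluded_middle_fails_general (n : ℕ) (c : Finset (Fin n))
    (hc : c ≠ Finset.univ) :
    ∃ (p : ℕ) (v : ℕ → Fin n → Bool) (i : Fin n),
      (Formula.or (.atom p) (.neg c (.atom p))).eval v i = false := by
  obtain ⟨i, hi⟩ : ∃ i, i ∉ c := by simpa [Finset.eq_univ_iff_forall] using hc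
  exact ⟨0, fun _ _ => false, i, Formula.eval_or_neg_of_notMem _ hi _⟩

theorem excluded_middle_fails (n : ℕ) (hn : 1 ≤ n) (c : Finset (Fin n))
    (hc : c ≠ Finset.univ) :
    ∃ (p : ℕ) (v : ℕ → Fin n → Bool) (i : Fin n),
      (Formula.or (.atom p) (.neg c (.atom p))).eval v i = false :=
  excluded_middle_fails_general n c hc
end

section
/- Semantic monotonicity across the systems CPN_n: if a formula over n worlds is not a tautology in CPN_n, then its natural embedding into CPN_{n+1} (via the inclusion Fin n ↪ Fin (n+1) applied to all chain indices) is not a tautology in CPN_{n+1}. -/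
def Formula.embed {n : ℕ} : Formula n → Formula (n + 1)
  | .atom p => .atom p
  | .bot c => .bot (c.image Fin.castSucc)
  | .neg c φ => .neg (c.image Fin.castSucc) φ.embed
  | .imp φ ψ => .imp φ.embed ψ.embed

theorem Formula.eval_embed_castSucc {n : ℕ} (φ : Formula n) (w : ℕ → Fin (n + 1) → Bool)
    (i : Fin n) :
    φ.embed.eval w i.castSucc = φ.eval (fun p j => w p j.castSucc) i := by
  have hmem (c : Finset (Fin n)) : i.castSucc ∈ c.image Fin.castSucc ↔ i ∈ c :=
    Fin.castSucc_injective n |>.mem_finset_image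
  induction φ with
  | atom p => rfl
  | bot c => simp only [embed, eval, hmem]
  | neg c φ ih => simp only [embed, eval, hmem, ih]
  | imp φ ψ ihφ ihψ => simp only [embed, eval, ihφ, ihψ]

theorem Formula.eval_embed_snoc {n : ℕ} (φ : Formula n) (v : ℕ → Fin n → Bool) (b : Bool)
    (i : Fin n) :
    φ.embed.eval (fun p => Fin.snoc (v p) b) i.castSucc = φ.eval v i := by
  simp only [eval_embed_castSucc, Fin.snoc_castSucc]

theorem Tautology.of_embed {n : ℕ} {φ : Formula n} (h : Tautology φ.embed) : Tautology φ :=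
  fun v i => φ.eval_embed_snoc v false i ▸ h _ _

theorem not_tautology_embed (n : ℕ) (φ : Formula n)
    (h : ¬ Tautology φ) : ¬ Tautology φ.embed :=
  mt Tautology.of_embed h
end
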